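/- Let M and N be closed subspaces of a Hilbert space H with orthogonal projections Π_M and Π_N. Then ‖Π_M − Π_N‖ = max{ ‖(1 − Π_M)·Π_N‖, ‖(1 − Π_N)·Π_M‖ }, where ‖·‖ is the operator norm. -/

import Mathlib

/-!
Write `P`, `Q` for the projections onto `M`, `N`. Since `(1 - P) Q = (Q - P) Q` and
`(1 - Q) P = (P - Q) P` with `‖P‖, ‖Q‖ ≤ 1`, the right-hand side is at most `‖P - Q‖`.
Conversely `(P - Q) x = P (1 - Q) x - (1 - P) Q x` is an orthogonal splitting along `M ⊕ Mᗮ`.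
The second piece is at most `‖(1 - P) Q‖ ‖Q x‖`; the first is at most
`‖P (1 - Q)‖ ‖(1 - Q) x‖ = ‖(1 - Q) P‖ ‖(1 - Q) x‖`, because `PR` and `RP` have the same norm
for orthogonal projections `P`, `R` (they are adjoint). Pythagoras,
`‖x‖² = ‖Q x‖² + ‖(1 - Q) x‖²`, then bounds `‖(P - Q) x‖` by the maximum times `‖x‖`.
-/
open ContinuousLinearMap

namespace Submodule

variable {𝕜 E : Type*} [RCLike 𝕜] [NormedAddCommGroup E] [InnerProductSpace 𝕜 E]
  (K L : Submodule 𝕜 E) [K.HasOrthogonalProjection] [L.HasOrthogonalProjection]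

theorem starProjection_starProjection_apply (x : E) :
    K.starProjection (K.starProjection x) = K.starProjection x :=
  starProjection_eq_self_iff.mpr (K.starProjection_apply_mem x)

theorem norm_apply_starProjection_le {F : Type*} [NormedAddCommGroup F] [NormedSpace 𝕜 F]
    (A : E →L[𝕜] F) (x : E) :
    ‖A (K.starProjection x)‖ ≤ ‖A ∘L K.starProjection‖ * ‖K.starProjection x‖ := by
  simpa only [comp_apply, starProjection_starProjection_apply] using
    (A ∘L K.starProjection).le_opNorm (K.starProjection x)

theorem norm_starProjection_comp_starProjection_le :
    ‖K.starProjection ∘L L.starProjection‖ ≤ ‖L.starProjection ∘L K.starProjection‖ := by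
  refine opNorm_le_bound _ (norm_nonneg _) fun x => ?_
  set y := K.starProjection (L.starProjection x)
  have hy : inner 𝕜 y y = inner 𝕜 ((L.starProjection ∘L K.starProjection) y) x := by
    rw [comp_apply, starProjection_starProjection_apply, inner_starProjection_left_eq_right L,
      ← inner_starProjection_left_eq_right K, starProjection_starProjection_apply]
  have hsq : ‖y‖ * ‖y‖ ≤ ‖L.starProjection ∘L K.starProjection‖ * ‖x‖ * ‖y‖ :=
    calc ‖y‖ * ‖y‖ = RCLike.re (inner 𝕜 y y) := (inner_self_eq_norm_mul_norm y).symm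
      _ ≤ ‖(L.starProjection ∘L K.starProjection) y‖ * ‖x‖ := hy ▸ re_inner_le_norm _ _
      _ ≤ ‖L.starProjection ∘L K.starProjection‖ * ‖x‖ * ‖y‖ := by
        rw [mul_right_comm]; gcongr; exact le_opNorm _ _
  rcases (norm_nonneg y).eq_or_lt with hy0 | hy0
  · rw [comp_apply, ← hy0]; positivity
  · exact le_of_mul_le_mul_right hsq hy0

theorem orthogonal_starProjection_comp_starProjection :
    Kᗮ.starProjection ∘L L.starProjection =
      (L.starProjection - K.starProjection) ∘L L.starProjection := by
  ext x
  simp only [comp_apply, sub_apply, starProjection_orthogonal_val,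
    starProjection_starProjection_apply]

theorem norm_orthogonal_starProjection_comp_starProjection_le :
    ‖Kᗮ.starProjection ∘L L.starProjection‖ ≤ ‖K.starProjection - L.starProjection‖ :=
  calc ‖Kᗮ.starProjection ∘L L.starProjection‖
      ≤ ‖L.starProjection - K.starProjection‖ * ‖L.starProjection‖ := by
        rw [orthogonal_starProjection_comp_starProjection]; exact opNorm_comp_le _ _
    _ ≤ ‖K.starProjection - L.starProjection‖ := by
        rw [norm_sub_rev]
        exact mul_le_of_le_one_right (norm_nonneg _) (starProjection_norm_le L)

theorem norm_starProjection_sub_starProjection_apply_sq (x : E) :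
    ‖K.starProjection x - L.starProjection x‖ ^ 2 =
      ‖K.starProjection (Lᗮ.starProjection x)‖ ^ 2 +
        ‖Kᗮ.starProjection (L.starProjection x)‖ ^ 2 := by
  rw [norm_sq_eq_add_norm_sq_starProjection _ K, ← norm_neg (Kᗮ.starProjection _)]
  congr 3 <;>
    simp only [starProjection_orthogonal_val, map_sub, starProjection_starProjection_apply]
  abel

theorem norm_starProjection_sub_starProjection_le :
    ‖K.starProjection - L.starProjection‖ ≤
      max ‖Kᗮ.starProjection ∘L L.starProjection‖ ‖Lᗮ.starProjection ∘L K.starProjection‖ := by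
  set c := max ‖Kᗮ.starProjection ∘L L.starProjection‖ ‖Lᗮ.starProjection ∘L K.starProjection‖
  refine opNorm_le_bound _ (by positivity) fun x => ?_
  have h₁ : ‖K.starProjection (Lᗮ.starProjection x)‖ ≤ c * ‖Lᗮ.starProjection x‖ :=
    calc _ ≤ ‖K.starProjection ∘L Lᗮ.starProjection‖ * ‖Lᗮ.starProjection x‖ :=
          norm_apply_starProjection_le _ _ _
      _ ≤ c * ‖Lᗮ.starProjection x‖ := by
          gcongr
          exact (norm_starProjection_comp_starProjection_le _ _).trans (le_max_right _ _)
  have h₂ : ‖Kᗮ.starProjection (L.starProjection x)‖ ≤ c * ‖L.starProjection x‖ :=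
    (norm_apply_starProjection_le _ _ _).trans (by gcongr; exact le_max_left _ _)
  rw [sub_apply, ← pow_le_pow_iff_left₀ (norm_nonneg _) (by positivity) two_ne_zero,
    norm_starProjection_sub_starProjection_apply_sq, mul_pow,
    norm_sq_eq_add_norm_sq_starProjection x L]
  nlinarith [pow_le_pow_left₀ (norm_nonneg _) h₁ 2, pow_le_pow_left₀ (norm_nonneg _) h₂ 2]

theorem norm_starProjection_sub_starProjection :
    ‖K.starProjection - L.starProjection‖ =
      max ‖Kᗮ.starProjection ∘L L.starProjection‖ ‖Lᗮ.starProjection ∘L K.starProjection‖ :=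
  (norm_starProjection_sub_starProjection_le K L).antisymm <|
    max_le (norm_orthogonal_starProjection_comp_starProjection_le K L) <| by
      rw [norm_sub_rev]; exact norm_orthogonal_starProjection_comp_starProjection_le L K

end Submodule

theorem kato_gap_formula_general {H : Type*} [NormedAddCommGroup H] [InnerProductSpace ℝ H]
    (M N : Submodule ℝ H) [CompleteSpace M] [CompleteSpace N] :
    ‖M.subtypeL.comp M.orthogonalProjectionOnto - N.subtypeL.comp N.orthogonalProjectionOnto‖ =
      max ‖(ContinuousLinearMap.id ℝ H - M.subtypeL.comp M.orthogonalProjectionOnto).comp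
            (N.subtypeL.comp N.orthogonalProjectionOnto)‖
          ‖(ContinuousLinearMap.id ℝ H - N.subtypeL.comp N.orthogonalProjectionOnto).comp
            (M.subtypeL.comp M.orthogonalProjectionOnto)‖ := by
  -- `K.subtypeL.comp K.orthogonalProjectionOnto` is `K.starProjection` by definition.
  have h := Submodule.norm_starProjection_sub_starProjection M N
  rwa [Submodule.starProjection_orthogonal, Submodule.starProjection_orthogonal] at h

theorem kato_gap_formula {H : Type*} [NormedAddCommGroup H] [InnerProductSpace ℝ H]
    [CompleteSpace H] (M N : Submodule ℝ H) [CompleteSpace M] [CompleteSpace N] :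
    ‖M.subtypeL.comp M.orthogonalProjectionOnto - N.subtypeL.comp N.orthogonalProjectionOnto‖ =
      max ‖(ContinuousLinearMap.id ℝ H - M.subtypeL.comp M.orthogonalProjectionOnto).comp
            (N.subtypeL.comp N.orthogonalProjectionOnto)‖
          ‖(ContinuousLinearMap.id ℝ H - N.subtypeL.comp N.orthogonalProjectionOnto).comp
            (M.subtypeL.comp M.orthogonalProjectionOnto)‖ :=
  kato_gap_formula_general M N
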